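/- arXiv:1109.3741 — 2 statements merged into one kernel-verified Lean document; each statement's English description precedes it below -/
import Mathlib

section
/- Let D be a digraph in which every nonempty proper subset X of V(D) satisfies d⁺(X) ≥ t(t−1) (i.e., D is strongly t(t−1)-edge-connected) and |V(D)| ≥ t. Then for any t distinct vertices v₁,…,v_t of D, there exists a family of pairwise edge-disjoint directed paths containing, for each ordered pair (i,j) with i ≠ j, a directed path from vᵢ to vⱼ. Consequently D contains an immersion of the complete digraph on t vertices. -/
/-!
Place one root at `vᵢ` for every ordered pair `(i, j)` with `i ≠ j`. Since there are
`t(t-1)` roots, strong `t(t-1)`-edge-connectivity is Edmonds' cut condition for them, so `D`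
has `t(t-1)` edge-disjoint spanning arborescences, and the one belonging to `(i, j)` contains
a trail from `vᵢ` to `vⱼ`.

Edmonds' theorem is proved as by Lovász: grow the arborescence of one root edge by edge from
the root, each time choosing an edge leaving the reached set whose deletion keeps the cut
condition for the remaining roots. Such an edge exists by uncrossing the tight sets.
-/

/-- A multidigraph on vertex type `V` with edge type `E`. -/
structure MDG (V : Type) (E : Type) where
  tail : E → V
  head : E → V

namespace MDG

variable {V E : Type}

/-- A directed walk from `u` to `w`, given as the list of its edges. -/
inductive IsWalk (D : MDG V E) : V → V → List E → Prop
  | nil (v : V) : IsWalk D v v []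
  | cons {u w : V} {e : E} {p : List E} :
      D.tail e = u → IsWalk D (D.head e) w p → IsWalk D u w (e :: p)

/-- Out-degree of a vertex. -/
def outDeg (D : MDG V E) [Fintype E] [DecidableEq V] (v : V) : ℕ :=
  (Finset.univ.filter fun e => D.tail e = v).card

/-- In-degree of a vertex. -/
def inDeg (D : MDG V E) [Fintype E] [DecidableEq V] (v : V) : ℕ :=
  (Finset.univ.filter fun e => D.head e = v).card

/-- Eulerian: in-degree equals out-degree at every vertex. -/
def Eulerian (D : MDG V E) [Fintype E] [DecidableEq V] : Prop :=
  ∀ v, D.outDeg v = D.inDeg v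

/-- Simple: no loops, and at most one edge per ordered pair of vertices. -/
def Simple (D : MDG V E) : Prop :=
  (∀ e, D.tail e ≠ D.head e) ∧
  ∀ e e', D.tail e = D.tail e' → D.head e = D.head e' → e = e'

/-- `d⁺(X)`: number of edges from `X` to its complement. -/
def cutOut (D : MDG V E) [Fintype E] [DecidableEq V] (X : Finset V) : ℕ :=
  (Finset.univ.filter fun e => D.tail e ∈ X ∧ D.head e ∉ X).card

/-- `d⁻(X)`: number of edges from the complement of `X` into `X`. -/
def cutIn (D : MDG V E) [Fintype E] [DecidableEq V] (X : Finset V) : ℕ :=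
  (Finset.univ.filter fun e => D.head e ∈ X ∧ D.tail e ∉ X).card

/-- `d(X) = d⁺(X) + d⁻(X)`. -/
def cut (D : MDG V E) [Fintype E] [DecidableEq V] (X : Finset V) : ℕ :=
  D.cutOut X + D.cutIn X

/-- Adjacency: there is an edge from `a` to `b`. -/
def Adj (D : MDG V E) (a b : V) : Prop :=
  ∃ e, D.tail e = a ∧ D.head e = b

/-- Immersion of the complete digraph `K⃗_t`: an injection `φ : Fin t → V` together with
pairwise edge-disjoint directed trails, one from `φ i` to `φ j` for each ordered pair
`i ≠ j`. -/
def ImmerseK (D : MDG V E) (t : ℕ) : Prop :=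
  ∃ φ : Fin t → V, Function.Injective φ ∧
    ∃ P : Fin t → Fin t → List E,
      (∀ i j : Fin t, i ≠ j → D.IsWalk (φ i) (φ j) (P i j) ∧ (P i j).Nodup) ∧
      ∀ i j i' j' : Fin t, (i, j) ≠ (i', j') → ∀ e, e ∈ P i j → e ∉ P i' j'

/-- Immersion of a multidigraph `F` in `D`: an injection of the vertices together with
pairwise edge-disjoint directed trails realizing the edges of `F`. -/
def Immerse (D : MDG V E) {n m : ℕ} (F : MDG (Fin n) (Fin m)) : Prop :=
  ∃ φ : Fin n → V, Function.Injective φ ∧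
    ∃ P : Fin m → List E,
      (∀ f, D.IsWalk (φ (F.tail f)) (φ (F.head f)) (P f) ∧ (P f).Nodup) ∧
      ∀ f f', f ≠ f' → ∀ e, e ∈ P f → e ∉ P f'

end MDG

namespace MDG

open Finset Function

variable {V E ι : Type} {D : MDG V E}

theorem IsWalk.append {u v w : V} {p q : List E} (hp : D.IsWalk u v p) (hq : D.IsWalk v w q) :
    D.IsWalk u w (p ++ q) := by
  induction hp with
  | nil => exact hq
  | cons ht _ ih => exact .cons ht (ih hq)

variable (D) in
def HasTrailIn (F : Finset E) (u w : V) : Prop :=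
  ∃ p : List E, D.IsWalk u w p ∧ p.Nodup ∧ ∀ e ∈ p, e ∈ F

theorem HasTrailIn.refl (F : Finset E) (u : V) : D.HasTrailIn F u u :=
  ⟨[], .nil u, List.nodup_nil, by simp⟩

theorem HasTrailIn.mono {F F' : Finset E} {u w : V} (h : D.HasTrailIn F u w) (hF : F ⊆ F') :
    D.HasTrailIn F' u w :=
  let ⟨p, hp, hnd, hpF⟩ := h
  ⟨p, hp, hnd, fun e he => hF (hpF e he)⟩

theorem HasTrailIn.snoc [DecidableEq E] {F : Finset E} {u : V} {e : E}
    (h : D.HasTrailIn F u (D.tail e)) (he : e ∉ F) : D.HasTrailIn (insert e F) u (D.head e) := by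
  obtain ⟨p, hp, hnd, hpF⟩ := h
  refine ⟨p ++ [e], hp.append (.cons rfl (.nil _)), ?_, ?_⟩
  · exact hnd.append (List.nodup_singleton e)
      (List.disjoint_singleton.mpr fun hep => he (hpF e hep))
  · simp only [List.mem_append, List.mem_singleton, mem_insert]
    rintro f (hf | rfl)
    exacts [Or.inr (hpF f hf), Or.inl rfl]

section Cuts

variable [DecidableEq V]

variable (D) in
def entering (A : Finset E) (X : Finset V) : Finset E :=
  {e ∈ A | D.head e ∈ X ∧ D.tail e ∉ X}

variable (D) in
def EdmondsCondition (ρ : ι → V) (s : Finset ι) (A : Finset E) : Prop :=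
  ∀ X : Finset V, X.Nonempty → #{i ∈ s | ρ i ∉ X} ≤ #(D.entering A X)

theorem entering_univ [Fintype V] (A : Finset E) : D.entering A univ = ∅ := by
  simp [entering]

theorem entering_erase [DecidableEq E] (A : Finset E) (X : Finset V) (e : E) :
    D.entering (A.erase e) X = (D.entering A X).erase e :=
  filter_erase _ _ _

theorem card_entering_union_add_inter_le (A : Finset E) (X Y : Finset V) :
    #(D.entering A (X ∪ Y)) + #(D.entering A (X ∩ Y)) ≤
      #(D.entering A X) + #(D.entering A Y) := by
  simp only [entering, card_filter, ← sum_add_distrib]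
  refine sum_le_sum fun e _ => ?_
  by_cases h1 : D.head e ∈ X <;> by_cases h2 : D.head e ∈ Y <;>
    by_cases h3 : D.tail e ∈ X <;> by_cases h4 : D.tail e ∈ Y <;>
    simp [h1, h2, h3, h4]

theorem card_filter_notMem_union_add_inter (ρ : ι → V) (s : Finset ι) (X Y : Finset V) :
    #{i ∈ s | ρ i ∉ X ∪ Y} + #{i ∈ s | ρ i ∉ X ∩ Y} =
      #{i ∈ s | ρ i ∉ X} + #{i ∈ s | ρ i ∉ Y} := by
  classical
  simp only [mem_union, mem_inter, not_or, not_and_or, filter_and, filter_or]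
  exact card_inter_add_card_union _ _

theorem cutOut_compl [Fintype V] [Fintype E] (X : Finset V) :
    D.cutOut Xᶜ = #(D.entering univ X) := by
  simp only [cutOut, entering, mem_compl, not_not]
  exact congrArg card (filter_congr fun _ _ => and_comm)

variable {ρ : ι → V} {s : Finset ι}

theorem EdmondsCondition.subset {A : Finset E} {t : Finset ι} (h : D.EdmondsCondition ρ s A)
    (hts : t ⊆ s) : D.EdmondsCondition ρ t A :=
  fun X hX => (card_le_card (filter_subset_filter _ hts)).trans (h X hX)

/-- Uncrossing of tight sets: the in-degree is submodular and the root count modular. -/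
theorem EdmondsCondition.card_entering_inter_le {B : Finset E} {T X : Finset V}
    (hB : D.EdmondsCondition ρ s B) (hT : #(D.entering B T) ≤ #{i ∈ s | ρ i ∉ T})
    (hX : #(D.entering B X) ≤ #{i ∈ s | ρ i ∉ X}) (hTX : (T ∩ X).Nonempty) :
    #(D.entering B (T ∩ X)) ≤ #{i ∈ s | ρ i ∉ T ∩ X} := by
  have hsub := card_entering_union_add_inter_le (D := D) B T X
  have hmod := card_filter_notMem_union_add_inter ρ s T X
  have hunion := hB (T ∪ X) (hTX.mono inter_subset_union)
  omega

theorem edmondsCondition_univ_of_le_cutOut [Fintype V] [Fintype E] {k : ℕ}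
    (hconn : ∀ X : Finset V, X.Nonempty → X ≠ univ → k ≤ D.cutOut X) (hs : #s ≤ k) :
    D.EdmondsCondition ρ s univ := by
  intro X hX
  rcases eq_or_ne X univ with rfl | hXu
  · simp
  have hXc : Xᶜ.Nonempty := nonempty_iff_ne_empty.mpr ((compl_eq_empty_iff X).not.mpr hXu)
  calc #{i ∈ s | ρ i ∉ X} ≤ #s := card_filter_le _ _
    _ ≤ k := hs
    _ ≤ D.cutOut Xᶜ := hconn _ hXc ((compl_ne_univ_iff_nonempty X).mpr hX)
    _ = #(D.entering univ X) := cutOut_compl X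

end Cuts

section Arborescences

variable [DecidableEq V] [DecidableEq E] {ρ : ι → V} {s : Finset ι}

theorem EdmondsCondition.erase {B : Finset E} {e : E} (hB : D.EdmondsCondition ρ s B)
    (he : ∀ X : Finset V, X.Nonempty → e ∈ D.entering B X →
      #{i ∈ s | ρ i ∉ X} < #(D.entering B X)) :
    D.EdmondsCondition ρ s (B.erase e) := by
  intro X hX
  rw [entering_erase]
  by_cases heX : e ∈ D.entering B X
  · have := he X hX heX
    rw [card_erase_of_mem heX]
    omega
  · rw [erase_eq_of_notMem heX]
    exact hB X hX

variable [Fintype V]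

/-- Lovász's key step: some edge leaving `S` can be deleted without violating the cut
condition. It is found inside an inclusion-minimal tight set `T ⊄ S` (the whole vertex set
is tight), among the edges entering `T \ S` from `S ∩ T`. -/
theorem exists_safe_edge {B : Finset E} {S : Finset V} (hB : D.EdmondsCondition ρ s B)
    (hS : S ≠ univ)
    (hout : ∀ X : Finset V, X.Nonempty → Disjoint X S →
      #{i ∈ s | ρ i ∉ X} < #(D.entering B X)) :
    ∃ e ∈ B, D.tail e ∈ S ∧ D.head e ∉ S ∧ D.EdmondsCondition ρ s (B.erase e) := by
  set 𝒯 : Finset (Finset V) :=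
    {T | T.Nonempty ∧ #(D.entering B T) ≤ #{i ∈ s | ρ i ∉ T} ∧ ¬ T ⊆ S}
  obtain ⟨x, -, hxS⟩ := exists_of_ssubset (ssubset_univ_iff.mpr hS)
  have huniv : univ ∈ 𝒯 := by
    simp only [𝒯, mem_filter, entering_univ, card_empty]
    exact ⟨mem_univ _, ⟨x, mem_univ x⟩, Nat.zero_le _, fun h => hxS (h (mem_univ x))⟩
  obtain ⟨T, hT𝒯, hTmin⟩ := exists_min_image 𝒯 card ⟨univ, huniv⟩
  obtain ⟨hTne, hTtight, hTS⟩ := (mem_filter.mp hT𝒯).2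
  have hlt : #(D.entering B T) < #(D.entering B (T \ S)) := calc
    _ ≤ #{i ∈ s | ρ i ∉ T} := hTtight
    _ ≤ #{i ∈ s | ρ i ∉ T \ S} :=
      card_le_card fun i hi => by
        simp only [mem_filter, mem_sdiff] at hi ⊢
        tauto
    _ < _ := hout _ (sdiff_nonempty.mpr hTS) disjoint_sdiff_self_left
  obtain ⟨f, hfTS, hfT⟩ := exists_mem_notMem_of_card_lt_card hlt
  simp only [entering, mem_filter, mem_sdiff] at hfTS hfT
  have htailT : D.tail f ∈ T := by tauto
  have htailS : D.tail f ∈ S := by tauto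
  refine ⟨f, hfTS.1, htailS, hfTS.2.1.2, hB.erase fun X _ hfX => ?_⟩
  by_contra! hXtight
  simp only [entering, mem_filter] at hfX
  have hTX : (T ∩ X).Nonempty := ⟨D.head f, mem_inter.mpr ⟨hfTS.2.1.1, hfX.2.1⟩⟩
  have hTX𝒯 : T ∩ X ∈ 𝒯 := mem_filter.mpr ⟨mem_univ _, hTX,
    hB.card_entering_inter_le hTtight hXtight hTX,
    fun h => hfTS.2.1.2 (h (mem_inter.mpr ⟨hfTS.2.1.1, hfX.2.1⟩))⟩
  have hsmaller : #(T ∩ X) < #T :=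
    card_lt_card ⟨inter_subset_left, fun h => hfX.2.2 (mem_inter.mp (h htailT)).2⟩
  exact (hTmin _ hTX𝒯).not_gt hsmaller

theorem exists_arborescence_of_partial {A F : Finset E} {S : Finset V} {r : V}
    (hFA : F ⊆ A) (hcond : D.EdmondsCondition ρ s (A \ F))
    (hout : ∀ X : Finset V, X.Nonempty → Disjoint X S →
      #{i ∈ s | ρ i ∉ X} < #(D.entering (A \ F) X))
    (hreach : ∀ w ∈ S, D.HasTrailIn F r w) :
    ∃ F' ⊆ A, D.EdmondsCondition ρ s (A \ F') ∧ ∀ w, D.HasTrailIn F' r w := by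
  by_cases hS : S = univ
  · exact ⟨F, hFA, hcond, fun w => hreach w (hS ▸ mem_univ w)⟩
  obtain ⟨e, heAF, htail, hhead, hcond'⟩ := exists_safe_edge hcond hS hout
  rw [mem_sdiff] at heAF
  rw [← sdiff_insert] at hcond'
  have hout' : ∀ X : Finset V, X.Nonempty → Disjoint X (insert (D.head e) S) →
      #{i ∈ s | ρ i ∉ X} < #(D.entering (A \ insert e F) X) := by
    intro X hX hXS
    rw [disjoint_insert_right] at hXS
    rw [sdiff_insert, entering_erase, erase_eq_of_notMem fun h => hXS.1 (mem_filter.mp h).2.1]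
    exact hout X hX hXS.2
  have hreach' : ∀ w ∈ insert (D.head e) S, D.HasTrailIn (insert e F) r w := by
    intro w hw
    rcases mem_insert.mp hw with rfl | hw
    · exact (hreach _ htail).snoc heAF.2
    · exact (hreach w hw).mono (subset_insert _ _)
  exact exists_arborescence_of_partial (insert_subset heAF.1 hFA) hcond' hout' hreach'
termination_by #Sᶜ
decreasing_by exact card_lt_card (compl_lt_compl_iff_lt.mpr (ssubset_insert hhead))

theorem exists_arborescence [DecidableEq ι] {A : Finset E} {a : ι} (ha : a ∉ s)
    (hA : D.EdmondsCondition ρ (insert a s) A) :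
    ∃ F ⊆ A, D.EdmondsCondition ρ s (A \ F) ∧ ∀ w, D.HasTrailIn F (ρ a) w := by
  refine exists_arborescence_of_partial (S := {ρ a}) (empty_subset A) ?_ ?_ ?_
  · rw [sdiff_empty]
    exact hA.subset (subset_insert a s)
  · intro X hX hXS
    have hA' := hA X hX
    rw [filter_insert, if_pos (disjoint_singleton_right.mp hXS),
      card_insert_of_notMem fun h => ha (mem_filter.mp h).1] at hA'
    rwa [sdiff_empty]
  · simpa using HasTrailIn.refl ∅ (ρ a)

/-- Edmonds' disjoint arborescence theorem. The arborescence rooted at `ρ i` is represented by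
the edge set `F i`, in which every vertex is reachable from `ρ i`. -/
theorem exists_pairwise_disjoint_arborescences {A : Finset E}
    (hA : D.EdmondsCondition ρ s A) :
    ∃ F : ι → Finset E, (∀ i, F i ⊆ A) ∧ Pairwise (Disjoint on F) ∧
      ∀ i ∈ s, ∀ w, D.HasTrailIn (F i) (ρ i) w := by
  classical
  induction s using Finset.induction_on generalizing A with
  | empty => exact ⟨fun _ => ∅, fun _ => empty_subset A, fun _ _ _ => disjoint_empty_left _,
      by simp⟩
  | insert a s ha ih =>
    obtain ⟨F₀, hF₀A, hcond, hreach₀⟩ := exists_arborescence ha hA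
    obtain ⟨F, hFA, hdisj, hreach⟩ := ih hcond
    have hF₀F : ∀ j, Disjoint F₀ (F j) := fun j => disjoint_sdiff.mono_right (hFA j)
    refine ⟨update F a F₀, fun i => ?_, fun i j hij => ?_, fun i hi w => ?_⟩
    · rcases eq_or_ne i a with rfl | hia
      · simpa using hF₀A
      · simpa [hia] using (hFA i).trans sdiff_subset
    · rcases eq_or_ne i a with rfl | hia
      · simpa [hij.symm, onFun] using hF₀F j
      · rcases eq_or_ne j a with rfl | hja
        · simpa [hia, onFun] using (hF₀F i).symm
        · simpa [hia, hja, onFun] using hdisj hij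
    · rcases eq_or_ne i a with rfl | hia
      · simpa using hreach₀ w
      · simpa [hia] using hreach i ((mem_insert.mp hi).resolve_left hia) w

end Arborescences

end MDG

open Finset MDG in
theorem edmonds_corollary_general {V E : Type} [Fintype V] [Fintype E] [DecidableEq V]
    (t : ℕ) (D : MDG V E)
    (hconn : ∀ X : Finset V, X.Nonempty → X ≠ Finset.univ → t * (t - 1) ≤ D.cutOut X)
    (v : Fin t → V) (hv : Function.Injective v) :
    (∃ P : Fin t → Fin t → List E,
      (∀ i j : Fin t, i ≠ j → D.IsWalk (v i) (v j) (P i j) ∧ (P i j).Nodup) ∧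
      ∀ i j i' j' : Fin t, (i, j) ≠ (i', j') → ∀ e, e ∈ P i j → e ∉ P i' j') ∧
    D.ImmerseK t := by
  classical
  have hcond : D.EdmondsCondition (fun p : Fin t × Fin t => v p.1) univ.offDiag univ :=
    edmondsCondition_univ_of_le_cutOut hconn (by simp [offDiag_card, Nat.mul_sub_one])
  obtain ⟨F, -, hdisj, hreach⟩ := exists_pairwise_disjoint_arborescences hcond
  have htrail : ∀ i j, D.HasTrailIn (F (i, j)) (v i) (v j) := by
    intro i j
    rcases eq_or_ne i j with rfl | hij
    · exact .refl _ _
    · exact hreach (i, j) (by simpa using hij) (v j)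
  choose P hwalk hnodup hPF using htrail
  have hP : (∀ i j : Fin t, i ≠ j → D.IsWalk (v i) (v j) (P i j) ∧ (P i j).Nodup) ∧
      ∀ i j i' j' : Fin t, (i, j) ≠ (i', j') → ∀ e, e ∈ P i j → e ∉ P i' j' :=
    ⟨fun i j _ => ⟨hwalk i j, hnodup i j⟩, fun i j i' j' hne e he he' =>
      disjoint_left.mp (hdisj hne) (hPF i j e he) (hPF i' j' e he')⟩
  exact ⟨⟨P, hP⟩, v, hv, P, hP⟩

/-- If `D` is strongly `t(t-1)`-edge-connected with at least `t` vertices, then for any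
`t` distinct vertices there is a family of pairwise edge-disjoint directed trails, one from
`vᵢ` to `vⱼ` for each ordered pair `i ≠ j`; consequently `D` immerses `K⃗_t`. -/
theorem edmonds_corollary {V E : Type} [Fintype V] [Fintype E] [DecidableEq V]
    (t : ℕ) (D : MDG V E)
    (hconn : ∀ X : Finset V, X.Nonempty → X ≠ Finset.univ → t * (t - 1) ≤ D.cutOut X)
    (hcard : t ≤ Fintype.card V)
    (v : Fin t → V) (hv : Function.Injective v) :
    (∃ P : Fin t → Fin t → List E,
      (∀ i j : Fin t, i ≠ j → D.IsWalk (v i) (v j) (P i j) ∧ (P i j).Nodup) ∧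
      ∀ i j i' j' : Fin t, (i, j) ≠ (i', j') → ∀ e, e ∈ P i j → e ∉ P i' j') ∧
    D.ImmerseK t :=
  edmonds_corollary_general t D hconn v hv
end

section
/- Let D be an Eulerian digraph and X₀ ⊇ X₁ ⊇ … ⊇ X_{r-1} a chain of vertex subsets such that for each k, X_k is a minimal subset of X_{k-1} with d(X_k) ≤ 2k (where X_{-1} = V(D) and d(V(D)) = 0). Then for any two distinct vertices x, y ∈ X_k, there exist at least k+1 pairwise edge-disjoint directed paths from x to y in D. -/
/-!
Since `D` is Eulerian, `d(Z) = 2 d⁺(Z)`, and `d⁺` is a symmetric submodular set function, so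
the cut condition becomes `k < d⁺(Z)` for every `Z` separating `x` from `y`. Suppose instead
`d⁺(Z) ≤ k` and put `A = X (k + 1)`. Minimality of `A` gives `d⁺(Z ∩ A), d⁺(Zᶜ ∩ A) > k`. Let
`X m` be the first set of the chain equal to `A`; then `m ≥ 1`, `d⁺(A) ≤ m - 1`, and uncrossing
`Z` and `Zᶜ` with `A` gives `d⁺(Z ∪ A), d⁺(Zᶜ ∪ A) ≤ m - 2`. A vertex `w ∈ X (m - 1) \ A` lies
outside one of these two sets, which therefore separates `x` or `y` from `w` inside `X (m - 1)`:
this contradicts the claim at the smaller level `m - 2`.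

The trails then come from the edge version of Menger's theorem: an integral `x`–`y` flow of
value `k + 1` is built by augmenting along simple residual paths (if `y` is unreachable, the
reachable set is a cut of size equal to the current value), and any such flow, viewed as a set
of edges, splits into `k + 1` edge-disjoint trails.
-/

open Finset Function

lemma pairwise_fin_cons {α : Type*} {r : α → α → Prop} (hr : ∀ ⦃a b⦄, r a b → r b a) {n : ℕ} {a : α}
    {f : Fin n → α} (ha : ∀ i, r a (f i)) (hf : Pairwise (r on f)) :
    Pairwise (r on (Fin.cons a f : Fin (n + 1) → α)) := by
  intro i j hij
  cases i using Fin.cases <;> cases j using Fin.cases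
  · exact absurd rfl hij
  · exact ha _
  · exact hr (ha _)
  · exact hf fun h => hij (congrArg Fin.succ h)

section SymmetricSubmodular

variable {V : Type} [Fintype V] [DecidableEq V] {f : Finset V → ℕ}

lemma lt_of_uncross (hsymm : ∀ Z, f Zᶜ = f Z) (hsub : ∀ A B, f (A ∪ B) + f (A ∩ B) ≤ f A + f B)
    {Z A : Finset V} {j k : ℕ} (hZ : f Z ≤ k) (hA : f A ≤ j) (hZA : k < f (Z ∩ A))
    (hZcA : k < f (Zᶜ ∩ A)) : f (Z ∪ A) < j ∧ f (Zᶜ ∪ A) < j := by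
  have h := hsub Z A
  have hc := hsub Zᶜ A
  rw [hsymm] at hc
  omega

lemma lt_of_separates_of_minimal_chain (hsymm : ∀ Z, f Zᶜ = f Z)
    (hsub : ∀ A B, f (A ∪ B) + f (A ∩ B) ≤ f A + f B) {r : ℕ} {X : ℕ → Finset V}
    (hX0 : X 0 = univ) (hchain : ∀ k < r, X (k + 1) ⊆ X k) (hle : ∀ k < r, f (X (k + 1)) ≤ k)
    (hmin : ∀ k < r, ∀ Y ⊂ X (k + 1), Y.Nonempty → k < f Y) :
    ∀ k < r, ∀ x ∈ X (k + 1), ∀ y ∈ X (k + 1), ∀ Z, x ∈ Z → y ∉ Z → k < f Z := by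
  intro k
  induction k using Nat.strong_induction_on with
  | _ k ih =>
  intro hk x hx y hy Z hxZ hyZ
  by_contra! hZ
  set A := X (k + 1)
  have hZA : k < f (Z ∩ A) := hmin k hk _
    ⟨inter_subset_right, fun h => hyZ (mem_of_mem_inter_left (h hy))⟩ ⟨x, mem_inter.2 ⟨hxZ, hx⟩⟩
  have hZcA : k < f (Zᶜ ∩ A) := hmin k hk _
    ⟨inter_subset_right, fun h => mem_compl.1 (mem_of_mem_inter_left (h hx)) hxZ⟩
    ⟨y, mem_inter.2 ⟨mem_compl.2 hyZ, hy⟩⟩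
  have hfirst : ∃ m, X m = A := ⟨k + 1, rfl⟩
  obtain ⟨hXm, hmk, hbefore⟩ :
      X (Nat.find hfirst) = A ∧ Nat.find hfirst ≤ k + 1 ∧ ∀ j < Nat.find hfirst, X j ≠ A :=
    ⟨Nat.find_spec hfirst, Nat.find_le rfl, fun j => Nat.find_min hfirst⟩
  rcases hm : Nat.find hfirst with _ | m
  · rw [hm, hX0] at hXm
    rw [← hXm, inter_univ] at hZA
    omega
  rw [hm] at hXm hmk hbefore
  obtain ⟨hZA', hZcA'⟩ := lt_of_uncross hsymm hsub hZ (hXm ▸ hle m (by omega)) hZA hZcA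
  obtain ⟨m, rfl⟩ : ∃ m', m = m' + 1 := Nat.exists_eq_add_one.2 (by omega)
  have hXA : A ⊆ X (m + 1) := hXm ▸ hchain (m + 1) (by omega)
  obtain ⟨w, hw, hwA⟩ := not_subset.1 fun h => hbefore (m + 1) (by omega) (subset_antisymm h hXA)
  by_cases hwZ : w ∈ Z
  · have := ih m (by omega) (by omega) y (hXA hy) w hw (Zᶜ ∪ A) (by simp [hyZ]) (by simp [hwZ, hwA])
    omega
  · have := ih m (by omega) (by omega) x (hXA hx) w hw (Z ∪ A) (by simp [hxZ]) (by simp [hwZ, hwA])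
    omega

end SymmetricSubmodular

namespace MDG

variable {V E : Type} {D : MDG V E}

section NetOutflow

variable [DecidableEq V]

def arcVec (u w : V) : V → ℤ := Pi.single u 1 - Pi.single w 1

lemma arcVec_self (v : V) : arcVec v v = 0 := sub_self _

lemma arcVec_add_arcVec (u v w : V) : arcVec u v + arcVec v w = arcVec u w :=
  sub_add_sub_cancel _ _ _

lemma neg_arcVec (u w : V) : -arcVec u w = arcVec w u := neg_sub _ _

lemma sum_arcVec_apply (u w : V) (Z : Finset V) :
    ∑ v ∈ Z, arcVec u w v = (if u ∈ Z then 1 else 0) - (if w ∈ Z then 1 else 0) := by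
  simp [arcVec, Pi.single_apply, sum_sub_distrib]

lemma sum_nsmul_arcVec_apply {x y : V} {Z : Finset V} (hx : x ∈ Z) (hy : y ∉ Z) (t : ℕ) :
    ∑ v ∈ Z, (t • arcVec x y) v = t := by
  simp [← Finset.mul_sum, sum_arcVec_apply, hx, hy]

def netOut (D : MDG V E) (S : Finset E) : V → ℤ :=
  ∑ e ∈ S, arcVec (D.tail e) (D.head e)

lemma IsWalk.sum_arcVec {u w : V} {p : List E} (h : D.IsWalk u w p) :
    (p.map fun e => arcVec (D.tail e) (D.head e)).sum = arcVec u w := by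
  induction h with
  | nil v => simp [arcVec_self]
  | cons ht _ ih => subst ht; simp [ih, arcVec_add_arcVec]

lemma IsWalk.netOut_toFinset [DecidableEq E] {u w : V} {p : List E} (h : D.IsWalk u w p)
    (hp : p.Nodup) : D.netOut p.toFinset = arcVec u w := by
  rw [netOut, List.sum_toFinset _ hp, h.sum_arcVec]

lemma IsWalk.netOut_sdiff [DecidableEq E] {S : Finset E} {u w : V} {p : List E}
    (h : D.IsWalk u w p) (hp : p.Nodup) (hpS : ∀ e ∈ p, e ∈ S) :
    D.netOut (S \ p.toFinset) = D.netOut S - arcVec u w := by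
  rw [← h.netOut_toFinset hp, netOut, netOut, netOut,
    sum_sdiff_eq_sub fun e he => hpS e (List.mem_toFinset.1 he)]

lemma sum_netOut (S : Finset E) (Z : Finset V) :
    ∑ v ∈ Z, D.netOut S v =
      (#{e ∈ S | D.tail e ∈ Z ∧ D.head e ∉ Z} : ℤ) - #{e ∈ S | D.head e ∈ Z ∧ D.tail e ∉ Z} := by
  simp only [netOut, Finset.sum_apply, natCast_card_filter, ← sum_sub_distrib]
  rw [sum_comm]
  refine sum_congr rfl fun e _ => ?_
  rw [sum_arcVec_apply]
  split_ifs <;> simp_all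

lemma exists_mem_tail_eq_of_netOut_pos {S : Finset E} {u : V} (hu : 0 < D.netOut S u) :
    ∃ e ∈ S, D.tail e = u := by
  by_contra! h
  refine hu.not_ge ?_
  rw [netOut, Finset.sum_apply]
  refine sum_nonpos fun e he => ?_
  simp only [arcVec, Pi.sub_apply, Pi.single_apply, if_neg (h e he).symm]
  split_ifs <;> simp

end NetOutflow

section Cuts

variable [Fintype E] [DecidableEq V]

lemma netOut_univ_eq_zero (he : D.Eulerian) : D.netOut univ = 0 := by
  funext v
  have h := he v
  simp only [outDeg, inDeg] at h
  simp only [netOut, arcVec, Finset.sum_apply, Pi.sub_apply, Pi.single_apply, sum_sub_distrib,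
    Pi.zero_apply, sum_boole, eq_comm (a := v), h, sub_self]

lemma cutOut_eq_cutIn (he : D.Eulerian) (Z : Finset V) : D.cutOut Z = D.cutIn Z := by
  have h := D.sum_netOut univ Z
  simp only [netOut_univ_eq_zero he, Pi.zero_apply, sum_const_zero] at h
  unfold cutOut cutIn
  omega

lemma cut_eq_two_mul_cutOut (he : D.Eulerian) (Z : Finset V) : D.cut Z = 2 * D.cutOut Z := by
  rw [cut, ← cutOut_eq_cutIn he]
  ring

lemma cutOut_compl_s17 [Fintype V] (he : D.Eulerian) (Z : Finset V) : D.cutOut Zᶜ = D.cutOut Z := by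
  rw [cutOut_eq_cutIn he]
  unfold cutOut cutIn
  simp only [mem_compl, not_not, and_comm]

lemma cutOut_union_add_cutOut_inter_le (A B : Finset V) :
    D.cutOut (A ∪ B) + D.cutOut (A ∩ B) ≤ D.cutOut A + D.cutOut B := by
  simp only [cutOut, card_filter, ← sum_add_distrib]
  refine sum_le_sum fun e _ => ?_
  by_cases D.tail e ∈ A <;> by_cases D.tail e ∈ B <;> by_cases D.head e ∈ A <;>
    by_cases D.head e ∈ B <;> simp [*]

end Cuts

section Residual

def ResArc (D : MDG V E) (S : Finset E) (e : E) (u w : V) : Prop :=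
  (e ∉ S ∧ D.tail e = u ∧ D.head e = w) ∨ (e ∈ S ∧ D.head e = u ∧ D.tail e = w)

def ResAdj (D : MDG V E) (S : Finset E) (u w : V) : Prop :=
  ∃ e, D.ResArc S e u w

/-- `u :: l` lists, from `u` back to `x`, the vertices of a residual path from `x` to `u` without
repeated vertices. -/
def SimpleResPath (D : MDG V E) (S : Finset E) (x u : V) (l : List V) : Prop :=
  (u :: l).IsChain (flip (D.ResAdj S)) ∧ (u :: l).Nodup ∧
    (u :: l).getLast (List.cons_ne_nil _ _) = x

lemma ResArc.congr {S T : Finset E} {e : E} {u w : V} (h : D.ResArc S e u w)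
    (hT : e ∈ T ↔ e ∈ S) : D.ResArc T e u w := by
  rwa [ResArc, hT]

lemma ResArc.endpoints {S : Finset E} {e : E} {u w : V} (h : D.ResArc S e u w) :
    (D.tail e = u ∨ D.tail e = w) ∧ (D.head e = u ∨ D.head e = w) := by
  rcases h with ⟨-, h₁, h₂⟩ | ⟨-, h₁, h₂⟩ <;> simp [h₁, h₂]

lemma SimpleResPath.extend {S : Finset E} {x u w : V} {l : List V}
    (hp : D.SimpleResPath S x u l) (huw : D.ResAdj S u w) : ∃ l', D.SimpleResPath S x w l' := by
  obtain ⟨hc, hn, hl⟩ := hp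
  by_cases hw : w ∈ u :: l
  · obtain ⟨s, t, hst⟩ := List.append_of_mem hw
    have hsuf : w :: t <:+ u :: l := ⟨s, hst.symm⟩
    refine ⟨t, hc.suffix hsuf, hn.sublist hsuf.sublist, ?_⟩
    rw [← hl]
    simp only [hst, List.getLast_append_of_ne_nil _ (List.cons_ne_nil w t)]
  · exact ⟨u :: l, List.isChain_cons_cons.2 ⟨huw, hc⟩, List.nodup_cons.2 ⟨hw, hn⟩,
      by rwa [List.getLast_cons]⟩

variable [DecidableEq V] [DecidableEq E]

lemma ResArc.exists_flip {S : Finset E} {e : E} {u w : V} (h : D.ResArc S e u w) :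
    ∃ S', D.netOut S' = D.netOut S + arcVec u w ∧ ∀ e' ≠ e, (e' ∈ S' ↔ e' ∈ S) := by
  rcases h with ⟨he, rfl, rfl⟩ | ⟨he, rfl, rfl⟩
  · refine ⟨insert e S, by rw [netOut, netOut, sum_insert he, add_comm], fun e' he' => ?_⟩
    simp [he']
  · refine ⟨S.erase e, ?_, fun e' he' => by simp [he']⟩
    rw [netOut, netOut, sum_erase_eq_sub he, sub_eq_add_neg, neg_arcVec]

lemma SimpleResPath.exists_netOut_eq_add {S : Finset E} {x u : V} {l : List V}
    (hp : D.SimpleResPath S x u l) {T : Finset E}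
    (hT : ∀ e, D.tail e ∈ l ∨ D.head e ∈ l → (e ∈ T ↔ e ∈ S)) :
    ∃ T', D.netOut T' = D.netOut T + arcVec x u := by
  induction l generalizing u T with
  | nil => exact ⟨T, by simp [← hp.2.2, arcVec_self]⟩
  | cons v l ih =>
    obtain ⟨hc, hn, hl⟩ := hp
    obtain ⟨⟨e, he⟩, hc⟩ := List.isChain_cons_cons.1 hc
    obtain ⟨hul, hn⟩ := List.nodup_cons.1 hn
    have hvl : v ∉ l := (List.nodup_cons.1 hn).1
    have hul : u ∉ l := fun h => hul (List.mem_cons_of_mem v h)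
    have heT : e ∈ T ↔ e ∈ S := hT e <| by
      rcases he with ⟨-, h, -⟩ | ⟨-, h, -⟩ <;> simp [h]
    obtain ⟨T₁, hT₁, hT₁T⟩ := (he.congr heT).exists_flip
    have hT₁S : ∀ e', D.tail e' ∈ l ∨ D.head e' ∈ l → (e' ∈ T₁ ↔ e' ∈ S) := by
      intro e' he'
      have hne : e' ≠ e := by
        rintro rfl
        obtain ⟨ht | ht, hh | hh⟩ := he.endpoints <;> rcases he' with h | h <;> simp_all
      rw [hT₁T e' hne, hT e' (he'.imp (List.mem_cons_of_mem v) (List.mem_cons_of_mem v))]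
    obtain ⟨T', hT'⟩ := ih ⟨hc, hn, by simpa using hl⟩ hT₁S
    exact ⟨T', by rw [hT', hT₁, add_assoc, add_comm (arcVec v u), arcVec_add_arcVec]⟩

end Residual

section Flows

variable [Fintype E] [DecidableEq V]

lemma cutOut_eq_sum_netOut_of_closed {S : Finset E} {Z : Finset V}
    (hZ : ∀ u w, u ∈ Z → D.ResAdj S u w → w ∈ Z) : (D.cutOut Z : ℤ) = ∑ v ∈ Z, D.netOut S v := by
  have henter : #{e ∈ S | D.head e ∈ Z ∧ D.tail e ∉ Z} = 0 := by
    refine card_eq_zero.2 (filter_eq_empty_iff.2 fun e he ⟨hh, ht⟩ => ht ?_)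
    exact hZ _ _ hh ⟨e, Or.inr ⟨he, rfl, rfl⟩⟩
  have hleave : ({e ∈ S | D.tail e ∈ Z ∧ D.head e ∉ Z} : Finset E) =
      ({e | D.tail e ∈ Z ∧ D.head e ∉ Z} : Finset E) := by
    ext e
    simp only [mem_filter, mem_univ, true_and, and_iff_right_iff_imp]
    exact fun ⟨ht, hh⟩ => by_contra fun he => hh (hZ _ _ ht ⟨e, Or.inl ⟨he, rfl, rfl⟩⟩)
  rw [sum_netOut, henter, hleave, cutOut, Nat.cast_zero, sub_zero]

variable [Fintype V] [DecidableEq E]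

lemma exists_netOut_eq_succ_nsmul {x y : V} {t : ℕ} {S : Finset E}
    (hS : D.netOut S = t • arcVec x y) (hcut : ∀ Z, x ∈ Z → y ∉ Z → t < D.cutOut Z) :
    ∃ S', D.netOut S' = (t + 1) • arcVec x y := by
  classical
  by_cases hreach : ∃ l, D.SimpleResPath S x y l
  · obtain ⟨l, hl⟩ := hreach
    obtain ⟨S', hS'⟩ := hl.exists_netOut_eq_add (T := S) fun _ _ => Iff.rfl
    exact ⟨S', by rw [hS', hS, succ_nsmul]⟩
  -- otherwise the vertices reachable from `x` form a cut whose size is the value `t` of `S`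
  set Z : Finset V := {u | ∃ l, D.SimpleResPath S x u l}
  have hxZ : x ∈ Z := by
    simpa [Z] using ⟨[], List.isChain_singleton _, List.nodup_singleton _, rfl⟩
  have hyZ : y ∉ Z := by simpa [Z] using hreach
  have hZ : ∀ u w, u ∈ Z → D.ResAdj S u w → w ∈ Z := by
    simp only [Z, mem_filter, mem_univ, true_and]
    exact fun u w ⟨l, hl⟩ huw => hl.extend huw
  have := cutOut_eq_sum_netOut_of_closed hZ
  rw [hS, sum_nsmul_arcVec_apply hxZ hyZ] at this
  exact absurd (hcut Z hxZ hyZ) (by omega)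

lemma exists_netOut_eq_nsmul_of_le_cutOut {x y : V} :
    ∀ t : ℕ, (∀ Z, x ∈ Z → y ∉ Z → t ≤ D.cutOut Z) → ∃ S, D.netOut S = t • arcVec x y
  | 0, _ => ⟨∅, by simp [netOut]⟩
  | t + 1, hcut => by
    obtain ⟨S, hS⟩ := exists_netOut_eq_nsmul_of_le_cutOut t
      fun Z hx hy => (Nat.le_succ t).trans (hcut Z hx hy)
    exact exists_netOut_eq_succ_nsmul hS hcut

end Flows

section Trails

variable [DecidableEq V] [DecidableEq E]

lemma exists_trail_of_netOut_pos {y : V} (S : Finset E) :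
    ∀ u, u ≠ y → (∀ v ≠ y, 0 ≤ D.netOut S v) → 0 < D.netOut S u →
      ∃ p, D.IsWalk u y p ∧ p.Nodup ∧ ∀ e ∈ p, e ∈ S := by
  induction S using Finset.strongInduction with
  | H S ih =>
  intro u huy hS hu
  obtain ⟨e, heS, rfl⟩ := exists_mem_tail_eq_of_netOut_pos hu
  by_cases hey : D.head e = y
  · exact ⟨[e], .cons rfl (hey ▸ .nil _), List.nodup_singleton e, by simpa⟩
  have herase : ∀ v, D.netOut (S.erase e) v = D.netOut S v - arcVec (D.tail e) (D.head e) v :=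
    fun v => by rw [netOut, sum_erase_eq_sub heS]; rfl
  obtain ⟨p, hp, hpn, hpS⟩ := ih (S.erase e) (erase_ssubset heS) (D.head e) hey
    (fun v hv => by
      have := hS v hv
      rw [herase]; simp only [arcVec, Pi.sub_apply, Pi.single_apply]
      split_ifs <;> subst_vars <;> omega)
    (by
      rw [herase]
      rcases eq_or_ne (D.head e) (D.tail e) with h | h
      · rwa [h, arcVec_self, Pi.zero_apply, sub_zero]
      · have := hS _ hey
        simp only [arcVec, Pi.sub_apply, Pi.single_apply, if_neg h, ↓reduceIte]
        omega)
  refine ⟨e :: p, .cons rfl hp, List.nodup_cons.2 ⟨fun he => ?_, hpn⟩, ?_⟩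
  · simpa using hpS e he
  · simpa [heS] using fun e' he' => mem_of_mem_erase (hpS e' he')

lemma exists_disjoint_trails_of_netOut_eq_nsmul {x y : V} (hxy : x ≠ y) :
    ∀ (t : ℕ) (S : Finset E), D.netOut S = t • arcVec x y →
      ∃ P : Fin t → List E, (∀ i, D.IsWalk x y (P i) ∧ (P i).Nodup) ∧
        Pairwise (List.Disjoint on P) ∧ ∀ i, ∀ e ∈ P i, e ∈ S
  | 0, _, _ => ⟨Fin.elim0, fun i => i.elim0, fun i => i.elim0, fun i => i.elim0⟩
  | t + 1, S, hS => by
    obtain ⟨p, hp, hpn, hpS⟩ := exists_trail_of_netOut_pos S x hxy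
      (fun v hv => by
        rw [hS, Pi.smul_apply, arcVec, Pi.sub_apply, Pi.single_apply, Pi.single_apply, if_neg hv,
          sub_zero]
        split_ifs <;> positivity)
      (by rw [hS]; simp [arcVec, hxy])
    obtain ⟨P, hP, hdisj, hPS⟩ := exists_disjoint_trails_of_netOut_eq_nsmul hxy t
      (S \ p.toFinset) (by rw [hp.netOut_sdiff hpn hpS, hS, succ_nsmul, add_sub_cancel_right])
    have hPp : ∀ i, p.Disjoint (P i) := fun i e hep heP =>
      (mem_sdiff.1 (hPS i e heP)).2 (List.mem_toFinset.2 hep)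
    refine ⟨Fin.cons p P, fun i => ?_, pairwise_fin_cons (fun _ _ h => h.symm) hPp hdisj,
      fun i => ?_⟩
    · cases i using Fin.cases
      · exact ⟨hp, hpn⟩
      · exact hP _
    · cases i using Fin.cases
      · exact hpS
      · exact fun e he => (mem_sdiff.1 (hPS _ e he)).1

end Trails

end MDG

-- `X (k + 1)` is the paper's `X_k`.
theorem chain_connectivity_general {V E : Type} [Fintype V] [Fintype E] [DecidableEq V]
    (D : MDG V E) (he : D.Eulerian) (r : ℕ) (X : ℕ → Finset V)
    (hX0 : X 0 = Finset.univ)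
    (hchain : ∀ k < r, X (k + 1) ⊆ X k)
    (hcut : ∀ k < r, D.cut (X (k + 1)) ≤ 2 * k)
    (hmin : ∀ k < r, ∀ Y : Finset V, Y ⊂ X (k + 1) → Y.Nonempty → ¬ D.cut Y ≤ 2 * k)
    (k : ℕ) (hk : k < r) (x y : V)
    (hx : x ∈ X (k + 1)) (hy : y ∈ X (k + 1)) (hxy : x ≠ y) :
    ∃ P : Fin (k + 1) → List E,
      (∀ i, D.IsWalk x y (P i) ∧ (P i).Nodup) ∧
      ∀ i i', i ≠ i' → ∀ e, e ∈ P i → e ∉ P i' := by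
  classical
  have hle : ∀ j < r, D.cutOut (X (j + 1)) ≤ j := fun j hj => by
    have := hcut j hj
    rw [MDG.cut_eq_two_mul_cutOut he] at this
    omega
  have hgt : ∀ j < r, ∀ Y ⊂ X (j + 1), Y.Nonempty → j < D.cutOut Y := fun j hj Y hY hne => by
    have := hmin j hj Y hY hne
    rw [MDG.cut_eq_two_mul_cutOut he] at this
    omega
  have hsep := lt_of_separates_of_minimal_chain (MDG.cutOut_compl_s17 he)
    MDG.cutOut_union_add_cutOut_inter_le hX0 hchain hle hgt k hk x hx y hy
  obtain ⟨S, hS⟩ := MDG.exists_netOut_eq_nsmul_of_le_cutOut (k + 1) hsep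
  obtain ⟨P, hP, hdisj, -⟩ := MDG.exists_disjoint_trails_of_netOut_eq_nsmul hxy (k + 1) S hS
  exact ⟨P, hP, fun i i' h _ hi hi' => hdisj h hi hi'⟩

/-- Let `D` be Eulerian and `X 1 ⊇ X 2 ⊇ … ⊇ X r` a chain of nonempty vertex subsets
(with `X 0 = V(D)`, so `X (k+1)` plays the role of the paper's `X_k`) such that each
`X (k+1)` is a minimal nonempty subset of `X k` with `d(X (k+1)) ≤ 2k`.  Then any two
distinct vertices of `X (k+1)` are joined by at least `k+1` pairwise edge-disjoint directed
trails. -/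
theorem chain_connectivity {V E : Type} [Fintype V] [Fintype E] [DecidableEq V]
    (D : MDG V E) (he : D.Eulerian) (r : ℕ) (X : ℕ → Finset V)
    (hX0 : X 0 = Finset.univ)
    (hchain : ∀ k < r, X (k + 1) ⊆ X k)
    (hne : ∀ k < r, (X (k + 1)).Nonempty)
    (hcut : ∀ k < r, D.cut (X (k + 1)) ≤ 2 * k)
    (hmin : ∀ k < r, ∀ Y : Finset V, Y ⊂ X (k + 1) → Y.Nonempty → ¬ D.cut Y ≤ 2 * k)
    (k : ℕ) (hk : k < r) (x y : V)
    (hx : x ∈ X (k + 1)) (hy : y ∈ X (k + 1)) (hxy : x ≠ y) :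
    ∃ P : Fin (k + 1) → List E,
      (∀ i, D.IsWalk x y (P i) ∧ (P i).Nodup) ∧
      ∀ i i', i ≠ i' → ∀ e, e ∈ P i → e ∉ P i' :=
  chain_connectivity_general D he r X hX0 hchain hcut hmin k hk x y hx hy hxy
end
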